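/- arXiv:1003.2045 — 2 statements merged into one kernel-verified Lean document; each statement's English description precedes it below -/
import Mathlib

section
/- Let x be a unit speed spacelike curve in Minkowski 4-space E₁⁴ with Frenet frame {T, N, B₁, B₂}, nowhere-vanishing curvatures k₁, k₂, k₃ and signs ε₁ = +1, ε₂ ∈ {−1,1} (so the principal normal N is spacelike). If x is a B₂-slant helix, then the function s ↦ (k₃(s)/k₂(s))² + (1/k₁(s)²)((k₃/k₂)'(s))² is constant. -/
/-- The Minkowski bilinear form on `ℝ⁴`: `⟪v,w⟫ = -v₀w₀ + v₁w₁ + v₂w₂ + v₃w₃`. -/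
noncomputable def mink (v w : Fin 4 → ℝ) : ℝ :=
  -(v 0 * w 0) + v 1 * w 1 + v 2 * w 2 + v 3 * w 3

open Matrix in
set_option maxHeartbeats 1000000 in
lemma frame_nondeg (v0 v1 v2 v3 U : Fin 4 → ℝ) (e : ℝ) (he : e = 1 ∨ e = -1)
    (h00 : mink v0 v0 = 1) (h11 : mink v1 v1 = 1) (h22 : mink v2 v2 = -e)
    (h33 : mink v3 v3 = e)
    (h01 : mink v0 v1 = 0) (h02 : mink v0 v2 = 0) (h03 : mink v0 v3 = 0)
    (h12 : mink v1 v2 = 0) (h13 : mink v1 v3 = 0) (h23 : mink v2 v3 = 0)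
    (hu0 : mink v0 U = 0) (hu1 : mink v1 U = 0) (hu2 : mink v2 U = 0)
    (hu3 : mink v3 U = 0) : U = 0 := by
  have he2 : e ^ 2 = 1 := by rcases he with h | h <;> rw [h] <;> norm_num
  simp only [mink] at h00 h11 h22 h33 h01 h02 h03 h12 h13 h23 hu0 hu1 hu2 hu3
  set M : Matrix (Fin 4) (Fin 4) ℝ := Matrix.of ![v0, v1, v2, v3] with hM
  set η : Matrix (Fin 4) (Fin 4) ℝ := !![-1,0,0,0; 0,1,0,0; 0,0,1,0; 0,0,0,1] with hη
  have hG : M * η * Mᵀ = !![1,0,0,0; 0,1,0,0; 0,0,-e,0; 0,0,0,e] := by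
    ext i j
    fin_cases i <;> fin_cases j <;>
      · simp [hM, hη, Matrix.mul_apply, Fin.sum_univ_four, Matrix.vecHead, Matrix.vecTail,
          Matrix.transpose_apply, Function.comp,
          (show ((2:Fin 3).succ : Fin 4) = 3 from rfl), (show ((1:Fin 3).succ : Fin 4) = 2 from rfl),
          (show ((0:Fin 3).succ : Fin 4) = 1 from rfl)]
        linarith
  have hdetη : η.det = -1 := by
    rw [hη]; simp [Matrix.det_succ_row_zero, Fin.sum_univ_succ, Fin.succAbove]
  have hdetG : (!![1,0,0,0; 0,1,0,0; 0,0,-e,0; 0,0,0,e] : Matrix (Fin 4) (Fin 4) ℝ).det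
      = -e^2 := by
    simp [Matrix.det_succ_row_zero, Fin.sum_univ_succ, Fin.succAbove]; ring
  have hdetM : M.det ^ 2 = 1 := by
    have h := congrArg Matrix.det hG
    rw [Matrix.det_mul, Matrix.det_mul, Matrix.det_transpose, hdetη, hdetG, he2] at h
    nlinarith [h]
  have hunit : IsUnit M.det := by
    have : M.det ≠ 0 := by intro h0; rw [h0] at hdetM; norm_num at hdetM
    exact Ne.isUnit this
  set w : Fin 4 → ℝ := η.mulVec U with hwdef
  have hwU : ∀ i, w i = ![-(U 0), U 1, U 2, U 3] i := by
    intro i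
    fin_cases i <;>
      simp [hwdef, hη, Matrix.mulVec, dotProduct, Fin.sum_univ_four,
        Matrix.vecHead, Matrix.vecTail]
  have hw : M.mulVec w = 0 := by
    funext i
    have e0 := hwU 0; have e1 := hwU 1; have e2 := hwU 2; have e3 := hwU 3
    simp at e0 e1 e2 e3
    fin_cases i <;>
      · simp [hM, Matrix.mulVec, dotProduct, Fin.sum_univ_four,
          Matrix.vecHead, Matrix.vecTail, e0, e1, e2, e3]
        linarith
  have hηU : w = 0 := by
    have h2 := congrArg (fun v => M⁻¹.mulVec v) hw
    simp only [Matrix.mulVec_mulVec, Matrix.nonsing_inv_mul M hunit, Matrix.one_mulVec] at h2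
    simpa using h2
  funext i
  have h0 : ∀ i, w i = 0 := fun i => congrFun hηU i
  fin_cases i
  · have := (hwU 0).symm.trans (h0 0); simp at this; simpa using this
  · have := (hwU 1).symm.trans (h0 1); simpa using this
  · have := (hwU 2).symm.trans (h0 2); simpa using this
  · have := (hwU 3).symm.trans (h0 3); simpa using this

lemma hasDerivAt_mink {F : ℝ → Fin 4 → ℝ} {F' : Fin 4 → ℝ} {s : ℝ}
    (h : HasDerivAt F F' s) (U : Fin 4 → ℝ) :
    HasDerivAt (fun t => mink (F t) U) (mink F' U) s := by
  have h0 := hasDerivAt_pi.mp h 0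
  have h1 := hasDerivAt_pi.mp h 1
  have h2 := hasDerivAt_pi.mp h 2
  have h3 := hasDerivAt_pi.mp h 3
  have := (((h0.mul_const (U 0)).neg.add (h1.mul_const (U 1))).add
      (h2.mul_const (U 2))).add (h3.mul_const (U 3))
  simp only [mink]; exact this

lemma mink_smul (a : ℝ) (v u : Fin 4 → ℝ) : mink (a • v) u = a * mink v u := by
  simp [mink]; ring

lemma mink_add (v w u : Fin 4 → ℝ) : mink (v + w) u = mink v u + mink w u := by
  simp [mink]; ring

/-- A unit speed spacelike curve in Minkowski 4-space `E₁⁴` together with a Frenet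
frame `{T, N, B₁, B₂}`, nowhere-vanishing curvatures `k₁, k₂, k₃` and signs `ε₁, ε₂`. -/
structure SpacelikeFrenetCurve where
  x : ℝ → Fin 4 → ℝ
  T : ℝ → Fin 4 → ℝ
  N : ℝ → Fin 4 → ℝ
  B₁ : ℝ → Fin 4 → ℝ
  B₂ : ℝ → Fin 4 → ℝ
  k₁ : ℝ → ℝ
  k₂ : ℝ → ℝ
  k₃ : ℝ → ℝ
  ε₁ : ℝ
  ε₂ : ℝ
  smooth_x : ContDiff ℝ (⊤ : ℕ∞) x
  smooth_T : ContDiff ℝ (⊤ : ℕ∞) T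
  smooth_N : ContDiff ℝ (⊤ : ℕ∞) N
  smooth_B₁ : ContDiff ℝ (⊤ : ℕ∞) B₁
  smooth_B₂ : ContDiff ℝ (⊤ : ℕ∞) B₂
  smooth_k₁ : ContDiff ℝ (⊤ : ℕ∞) k₁
  smooth_k₂ : ContDiff ℝ (⊤ : ℕ∞) k₂
  smooth_k₃ : ContDiff ℝ (⊤ : ℕ∞) k₃
  k₁_ne : ∀ s, k₁ s ≠ 0
  k₂_ne : ∀ s, k₂ s ≠ 0
  k₃_ne : ∀ s, k₃ s ≠ 0
  ε₁_sign : ε₁ = 1 ∨ ε₁ = -1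
  ε₂_sign : ε₂ = 1 ∨ ε₂ = -1
  tangent : ∀ s, deriv x s = T s
  TT : ∀ s, mink (T s) (T s) = 1
  NN : ∀ s, mink (N s) (N s) = ε₁
  B₁B₁ : ∀ s, mink (B₁ s) (B₁ s) = -(ε₁ * ε₂)
  B₂B₂ : ∀ s, mink (B₂ s) (B₂ s) = ε₂
  TN : ∀ s, mink (T s) (N s) = 0
  TB₁ : ∀ s, mink (T s) (B₁ s) = 0
  TB₂ : ∀ s, mink (T s) (B₂ s) = 0
  NB₁ : ∀ s, mink (N s) (B₁ s) = 0
  NB₂ : ∀ s, mink (N s) (B₂ s) = 0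
  B₁B₂ : ∀ s, mink (B₁ s) (B₂ s) = 0
  frenet_T : ∀ s, deriv T s = k₁ s • N s
  frenet_N : ∀ s, deriv N s = (-(ε₁ * k₁ s)) • T s + k₂ s • B₁ s
  frenet_B₁ : ∀ s, deriv B₁ s = (ε₂ * k₂ s) • N s + k₃ s • B₂ s
  frenet_B₂ : ∀ s, deriv B₂ s = (ε₁ * k₃ s) • B₁ s

/-- `x` is a `B₂`-slant helix: a nonzero constant vector `U` makes a constant
"angle" with the second binormal, i.e. `s ↦ ⟪B₂ s, U⟫` is constant. -/
def IsB₂SlantHelix (c : SpacelikeFrenetCurve) : Prop :=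
  ∃ U : Fin 4 → ℝ, U ≠ 0 ∧ ∃ C : ℝ, ∀ s : ℝ, mink (c.B₂ s) U = C

/-- Case `ε₁ = +1` (spacelike principal normal): if `x` is a `B₂`-slant helix then
`s ↦ (k₃/k₂)² + (1/k₁²)((k₃/k₂)')²` is constant. -/
theorem stmt8 (c : SpacelikeFrenetCurve) (hε : c.ε₁ = 1)
    (h : IsB₂SlantHelix c) :
    ∃ m : ℝ, ∀ s : ℝ, (c.k₃ s / c.k₂ s) ^ 2
      + (1 / c.k₁ s ^ 2) * (deriv (fun t => c.k₃ t / c.k₂ t) s) ^ 2 = m := by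
  obtain ⟨U, hU, C, hC⟩ := h
  -- HasDerivAt facts for the frame
  have hdT : ∀ s, HasDerivAt c.T (c.k₁ s • c.N s) s := fun s => by
    have := (c.smooth_T.differentiable (by simp) s).hasDerivAt
    rwa [c.frenet_T s] at this
  have hdN : ∀ s, HasDerivAt c.N ((-(c.ε₁ * c.k₁ s)) • c.T s + c.k₂ s • c.B₁ s) s := fun s => by
    have := (c.smooth_N.differentiable (by simp) s).hasDerivAt
    rwa [c.frenet_N s] at this
  have hdB₁ : ∀ s, HasDerivAt c.B₁ ((c.ε₂ * c.k₂ s) • c.N s + c.k₃ s • c.B₂ s) s := fun s => by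
    have := (c.smooth_B₁.differentiable (by simp) s).hasDerivAt
    rwa [c.frenet_B₁ s] at this
  have hdB₂ : ∀ s, HasDerivAt c.B₂ ((c.ε₁ * c.k₃ s) • c.B₁ s) s := fun s => by
    have := (c.smooth_B₂.differentiable (by simp) s).hasDerivAt
    rwa [c.frenet_B₂ s] at this
  -- step 1 : ⟪B₁,U⟫ = 0
  have hb1 : ∀ s, mink (c.B₁ s) U = 0 := by
    intro s
    have hd := hasDerivAt_mink (hdB₂ s) U
    have hconst : (fun t => mink (c.B₂ t) U) = fun _ => C := funext hC
    have h0 : HasDerivAt (fun t => mink (c.B₂ t) U) 0 s := by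
      rw [hconst]; exact hasDerivAt_const s C
    have := hd.unique h0
    rw [mink_smul, hε] at this
    have h1 : c.k₃ s * mink (c.B₁ s) U = 0 := by linarith
    exact (mul_eq_zero.mp h1).resolve_left (c.k₃_ne s)
  -- step 2 : ⟪N,U⟫ = -(ε₂ C) k₃/k₂
  have hn : ∀ s, mink (c.N s) U = -(c.ε₂ * C) * (c.k₃ s / c.k₂ s) := by
    intro s
    have hd := hasDerivAt_mink (hdB₁ s) U
    have hconst : (fun t => mink (c.B₁ t) U) = fun _ => (0:ℝ) := funext hb1
    have h0 : HasDerivAt (fun t => mink (c.B₁ t) U) 0 s := by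
      rw [hconst]; exact hasDerivAt_const s 0
    have key := hd.unique h0
    rw [mink_add, mink_smul, mink_smul, hC s] at key
    rcases c.ε₂_sign with h2 | h2 <;> rw [h2] at key ⊢ <;>
      field_simp [c.k₂_ne s] <;> linarith
  -- derivative of ρ = k₃/k₂
  have hρ : ∀ s, HasDerivAt (fun t => c.k₃ t / c.k₂ t)
      (deriv (fun t => c.k₃ t / c.k₂ t) s) s := by
    intro s
    exact (((c.smooth_k₃.differentiable (by simp) s).div
      (c.smooth_k₂.differentiable (by simp) s) (c.k₂_ne s))).hasDerivAt
  -- derivative of ⟪N,U⟫ two ways; step 3 : ⟪T,U⟫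
  have hdn : ∀ s, HasDerivAt (fun t => mink (c.N t) U) (-(c.k₁ s) * mink (c.T s) U) s := by
    intro s
    have hd := hasDerivAt_mink (hdN s) U
    rw [mink_add, mink_smul, mink_smul, hb1 s, hε] at hd
    simpa using hd
  have ht : ∀ s, mink (c.T s) U
      = (c.ε₂ * C) * deriv (fun t => c.k₃ t / c.k₂ t) s / c.k₁ s := by
    intro s
    have h1 : HasDerivAt (fun t => mink (c.N t) U)
        (-(c.ε₂ * C) * deriv (fun t => c.k₃ t / c.k₂ t) s) s := by
      have hfun : (fun t => mink (c.N t) U)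
          = fun t => -(c.ε₂ * C) * (c.k₃ t / c.k₂ t) := funext hn
      rw [hfun]
      exact (hρ s).const_mul _
    have key := (hdn s).unique h1
    field_simp [c.k₁_ne s]
    linarith [key]
  -- the conserved quantity
  have hdt : ∀ s, HasDerivAt (fun t => mink (c.T t) U) (c.k₁ s * mink (c.N s) U) s := by
    intro s
    have hd := hasDerivAt_mink (hdT s) U
    rwa [mink_smul] at hd
  set g : ℝ → ℝ := fun s => (mink (c.T s) U)^2 + (mink (c.N s) U)^2 with hg
  have hdg : ∀ s, HasDerivAt g 0 s := by
    intro s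
    have h1 := ((hdt s).pow 2).add ((hdn s).pow 2)
    have e0 : (2:ℕ) * mink (c.T s) U ^ (2-1) * (c.k₁ s * mink (c.N s) U)
        + (2:ℕ) * mink (c.N s) U ^ (2-1) * (-(c.k₁ s) * mink (c.T s) U) = 0 := by
      push_cast; ring
    rw [e0] at h1
    exact h1
  have hgconst : ∀ s, g s = g 0 :=
    fun s => is_const_of_deriv_eq_zero (fun t => (hdg t).differentiableAt)
      (fun t => (hdg t).deriv) s 0
  by_cases hc0 : C = 0
  · -- contradiction : U must be 0
    exfalso
    apply hU
    have hn0 : mink (c.N 0) U = 0 := by rw [hn 0, hc0]; ring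
    have ht0 : mink (c.T 0) U = 0 := by rw [ht 0, hc0]; ring
    have hb20 : mink (c.B₂ 0) U = 0 := by rw [hC 0, hc0]
    have hB₁B₁ := c.B₁B₁ 0
    rw [hε] at hB₁B₁
    have hNN := c.NN 0
    rw [hε] at hNN
    exact frame_nondeg (c.T 0) (c.N 0) (c.B₁ 0) (c.B₂ 0) U c.ε₂ c.ε₂_sign
      (c.TT 0) hNN (by simpa using hB₁B₁) (c.B₂B₂ 0)
      (c.TN 0) (c.TB₁ 0) (c.TB₂ 0) (c.NB₁ 0) (c.NB₂ 0) (c.B₁B₂ 0)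
      ht0 hn0 (hb1 0) hb20
  · refine ⟨g 0 / C^2, fun s => ?_⟩
    have hK := hgconst s
    rw [hg] at hK
    simp only at hK
    rw [ht s, hn s] at hK
    rcases c.ε₂_sign with h2 | h2 <;> rw [h2] at hK <;>
      · rw [eq_div_iff (by positivity : (C:ℝ)^2 ≠ 0)]
        field_simp [c.k₁_ne s, c.k₂_ne s] at hK ⊢
        linear_combination hK
end

section
/- (Theorem 3.2) A unit speed spacelike curve x : ℝ → E₁⁴ with Frenet frame {T, N, B₁, B₂}, nowhere-vanishing curvatures k₁, k₂, k₃ and signs ε₁, ε₂ is a B₂-slant helix if and only if there exists a C²-function f : ℝ → ℝ such that f(s) k₁(s) = ε₁ (k₃/k₂)'(s) and f'(s) = −k₁(s) · (k₃(s)/k₂(s)) for all s. -/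
private lemma mink_hasDerivAt {V : ℝ → Fin 4 → ℝ} {v : Fin 4 → ℝ} {s : ℝ} (U : Fin 4 → ℝ)
    (h : HasDerivAt V v s) : HasDerivAt (fun t => mink (V t) U) (mink v U) s := by
  have h' := hasDerivAt_pi.1 h
  have H := ((((h' 0).mul_const (U 0)).neg.add ((h' 1).mul_const (U 1))).add
    ((h' 2).mul_const (U 2))).add ((h' 3).mul_const (U 3))
  exact H

private lemma mink_contDiff {V : ℝ → Fin 4 → ℝ} (U : Fin 4 → ℝ) (h : ContDiff ℝ (⊤ : ℕ∞) V) :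
    ContDiff ℝ (⊤ : ℕ∞) (fun t => mink (V t) U) := by
  have h' := contDiff_pi.1 h
  have H := ((((h' 0).mul (contDiff_const (c := U 0))).neg.add
    ((h' 1).mul (contDiff_const (c := U 1)))).add
    ((h' 2).mul (contDiff_const (c := U 2)))).add ((h' 3).mul (contDiff_const (c := U 3)))
  simpa [mink] using H

private lemma mink_smul_left (x : ℝ) (v w : Fin 4 → ℝ) : mink (x • v) w = x * mink v w := by
  simp only [mink, Pi.smul_apply, smul_eq_mul]; ring

private lemma mink_add_left (v v' w : Fin 4 → ℝ) :
    mink (v + v') w = mink v w + mink v' w := by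
  simp only [mink, Pi.add_apply]; ring

private lemma mink_smul_right (x : ℝ) (v w : Fin 4 → ℝ) : mink v (x • w) = x * mink v w := by
  simp only [mink, Pi.smul_apply, smul_eq_mul]; ring

private lemma mink_add_right (v w w' : Fin 4 → ℝ) :
    mink v (w + w') = mink v w + mink v w' := by
  simp only [mink, Pi.add_apply]; ring

private lemma mink_comm (v w : Fin 4 → ℝ) : mink v w = mink w v := by
  simp only [mink]; ring

private lemma mink_zero_right (v : Fin 4 → ℝ) : mink v 0 = 0 := by
  simp [mink]

set_option maxHeartbeats 1000000 in
private lemma frame_nondeg_s14 (T N B₁ B₂ U : Fin 4 → ℝ) (ε₁ ε₂ : ℝ)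
    (hε₁ : ε₁ = 1 ∨ ε₁ = -1) (hε₂ : ε₂ = 1 ∨ ε₂ = -1)
    (hTT : mink T T = 1) (hNN : mink N N = ε₁) (hB₁B₁ : mink B₁ B₁ = -(ε₁*ε₂))
    (hB₂B₂ : mink B₂ B₂ = ε₂) (hTN : mink T N = 0) (hTB₁ : mink T B₁ = 0)
    (hTB₂ : mink T B₂ = 0) (hNB₁ : mink N B₁ = 0) (hNB₂ : mink N B₂ = 0)
    (hB₁B₂ : mink B₁ B₂ = 0)
    (h1 : mink T U = 0) (h2 : mink N U = 0) (h3 : mink B₁ U = 0) (h4 : mink B₂ U = 0) :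
    U = 0 := by
  simp only [mink] at hTT hNN hB₁B₁ hB₂B₂ hTN hTB₁ hTB₂ hNB₁ hNB₂ hB₁B₂ h1 h2 h3 h4
  set M : Matrix (Fin 4) (Fin 4) ℝ := Matrix.of ![T, N, B₁, B₂] with hM
  set Mt : Matrix (Fin 4) (Fin 4) ℝ := Matrix.of (fun i j => ![T, N, B₁, B₂] j i) with hMt
  set η : Matrix (Fin 4) (Fin 4) ℝ :=
    Matrix.of ![![-1,0,0,0], ![0,1,0,0], ![0,0,1,0], ![0,0,0,1]] with hη
  set D : Matrix (Fin 4) (Fin 4) ℝ :=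
    Matrix.of ![![1,0,0,0], ![0,ε₁,0,0], ![0,0,-(ε₁*ε₂),0], ![0,0,0,ε₂]] with hD
  have hG : M * η * Mt = D := by
    ext i j
    fin_cases i <;> fin_cases j <;>
      simp [hM, hMt, hη, hD, Matrix.mul_apply, Fin.sum_univ_four, Matrix.vecHead,
        Matrix.vecTail, show (Fin.succ 0 : Fin 4) = 1 by decide,
        show (Fin.succ 1 : Fin 4) = 2 by decide, show (Fin.succ 2 : Fin 4) = 3 by decide] <;>
      first
        | linear_combination hTT | linear_combination hNN | linear_combination hB₁B₁
        | linear_combination hB₂B₂ | linear_combination hTN | linear_combination hTB₁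
        | linear_combination hTB₂ | linear_combination hNB₁ | linear_combination hNB₂
        | linear_combination hB₁B₂
  have hD2 : D * D = 1 := by
    ext i j
    fin_cases i <;> fin_cases j <;>
      simp [hD, Matrix.mul_apply, Fin.sum_univ_four, Matrix.one_apply, Matrix.vecHead,
        Matrix.vecTail] <;>
      rcases hε₁ with h | h <;> rcases hε₂ with h' | h' <;> norm_num [h, h']
  have hMP : M * (η * Mt * D) = 1 := by
    rw [show M * (η * Mt * D) = M * η * Mt * D by simp [Matrix.mul_assoc], hG, hD2]
  have hPM : (η * Mt * D) * M = 1 := mul_eq_one_comm.mp hMP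
  set w : Fin 4 → ℝ := ![-(U 0), U 1, U 2, U 3] with hw
  have hMw : M.mulVec w = 0 := by
    funext i
    fin_cases i <;>
      simp [hM, hw, Matrix.mulVec, dotProduct, Fin.sum_univ_four, Matrix.vecHead,
        Matrix.vecTail, show (Fin.succ 0 : Fin 4) = 1 by decide,
        show (Fin.succ 1 : Fin 4) = 2 by decide, show (Fin.succ 2 : Fin 4) = 3 by decide] <;>
      first
        | linear_combination h1 | linear_combination h2 | linear_combination h3
        | linear_combination h4
  have hw0 : w = 0 := by
    calc w = Matrix.mulVec 1 w := by rw [Matrix.one_mulVec]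
    _ = ((η * Mt * D) * M).mulVec w := by rw [hPM]
    _ = (η * Mt * D).mulVec (M.mulVec w) := by rw [← Matrix.mulVec_mulVec]
    _ = 0 := by rw [hMw, Matrix.mulVec_zero]
  funext i
  fin_cases i <;>
    [have h := congrFun hw0 0; have h := congrFun hw0 1; have h := congrFun hw0 2;
     have h := congrFun hw0 3] <;>
    simp [hw] at h <;> simp [h]

private lemma SpacelikeFrenetCurve.hT (c : SpacelikeFrenetCurve) (s : ℝ) :
    HasDerivAt c.T (c.k₁ s • c.N s) s := by
  have h := ((c.smooth_T.differentiable (by simp)) s).hasDerivAt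
  rwa [c.frenet_T s] at h

private lemma SpacelikeFrenetCurve.hN (c : SpacelikeFrenetCurve) (s : ℝ) :
    HasDerivAt c.N ((-(c.ε₁ * c.k₁ s)) • c.T s + c.k₂ s • c.B₁ s) s := by
  have h := ((c.smooth_N.differentiable (by simp)) s).hasDerivAt
  rwa [c.frenet_N s] at h

private lemma SpacelikeFrenetCurve.hB₁ (c : SpacelikeFrenetCurve) (s : ℝ) :
    HasDerivAt c.B₁ ((c.ε₂ * c.k₂ s) • c.N s + c.k₃ s • c.B₂ s) s := by
  have h := ((c.smooth_B₁.differentiable (by simp)) s).hasDerivAt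
  rwa [c.frenet_B₁ s] at h

private lemma SpacelikeFrenetCurve.hB₂ (c : SpacelikeFrenetCurve) (s : ℝ) :
    HasDerivAt c.B₂ ((c.ε₁ * c.k₃ s) • c.B₁ s) s := by
  have h := ((c.smooth_B₂.differentiable (by simp)) s).hasDerivAt
  rwa [c.frenet_B₂ s] at h

/-- Theorem 3.2: `x` is a `B₂`-slant helix iff there is a `C²` function `f` with
`f k₁ = ε₁ (k₃/k₂)'` and `f' = −k₁ (k₃/k₂)`. -/
theorem stmt14 (c : SpacelikeFrenetCurve) :
    IsB₂SlantHelix c ↔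
    ∃ f : ℝ → ℝ, ContDiff ℝ 2 f ∧
      (∀ s : ℝ, f s * c.k₁ s = c.ε₁ * deriv (fun t => c.k₃ t / c.k₂ t) s) ∧
      (∀ s : ℝ, deriv f s = -(c.k₁ s * (c.k₃ s / c.k₂ s))) := by
  have hε₁ := c.ε₁_sign
  have hε₂ := c.ε₂_sign
  have hε₁ne : c.ε₁ ≠ 0 := by rcases hε₁ with h | h <;> rw [h] <;> norm_num
  have hrc : ContDiff ℝ (⊤ : ℕ∞) (fun t => c.k₃ t / c.k₂ t) := c.smooth_k₃.div c.smooth_k₂ c.k₂_ne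
  have hrd : ∀ s, HasDerivAt (fun t => c.k₃ t / c.k₂ t)
      (deriv (fun t => c.k₃ t / c.k₂ t) s) s :=
    fun s => ((hrc.differentiable (by simp)) s).hasDerivAt
  constructor
  · rintro ⟨U, hU0, C, hC⟩
    -- third component vanishes
    have hp0 : ∀ s, mink (c.B₁ s) U = 0 := by
      intro s
      have h := mink_hasDerivAt U (c.hB₂ s)
      rw [show (fun t => mink (c.B₂ t) U) = fun _ => C from funext hC] at h
      have h0 := h.unique (hasDerivAt_const s C)
      rw [mink_smul_left] at h0
      exact (mul_eq_zero.mp h0).resolve_left (mul_ne_zero hε₁ne (c.k₃_ne s))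
    -- second component
    have hb : ∀ s, c.ε₂ * c.k₂ s * mink (c.N s) U + c.k₃ s * C = 0 := by
      intro s
      have h := mink_hasDerivAt U (c.hB₁ s)
      rw [show (fun t => mink (c.B₁ t) U) = fun _ => (0:ℝ) from funext hp0] at h
      have h0 := (h.unique (hasDerivAt_const s 0))
      rw [mink_add_left, mink_smul_left, mink_smul_left, hC s] at h0
      linear_combination h0
    have hbval : ∀ s, mink (c.N s) U = -(c.ε₂ * C * (c.k₃ s / c.k₂ s)) := by
      intro s
      have h := hb s
      have hk := c.k₂_ne s
      field_simp
      rcases hε₂ with h' | h' <;> rw [h'] at h ⊢ <;>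
        first | linear_combination h | linear_combination -h
    have key : ∀ s, c.ε₁ * c.k₁ s * mink (c.T s) U
        = c.ε₂ * C * deriv (fun t => c.k₃ t / c.k₂ t) s := by
      intro s
      have h := mink_hasDerivAt U (c.hN s)
      rw [show (fun t => mink (c.N t) U) = fun t => -(c.ε₂ * C) * (c.k₃ t / c.k₂ t) from
        funext (fun t => by rw [hbval t]; ring)] at h
      have h0 := h.unique ((hrd s).const_mul (-(c.ε₂ * C)))
      rw [mink_add_left, mink_smul_left, mink_smul_left, hp0 s] at h0
      linear_combination -h0
    have hCne : C ≠ 0 := by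
      intro hC0
      subst hC0
      have ha0 : ∀ s, mink (c.T s) U = 0 := by
        intro s
        have h := key s
        have h' : c.ε₁ * c.k₁ s * mink (c.T s) U = 0 := by rw [h]; ring
        exact (mul_eq_zero.mp h').resolve_left (mul_ne_zero hε₁ne (c.k₁_ne s))
      have hb0 : mink (c.N 0) U = 0 := by rw [hbval 0]; ring
      exact hU0 (frame_nondeg_s14 (c.T 0) (c.N 0) (c.B₁ 0) (c.B₂ 0) U c.ε₁ c.ε₂ hε₁ hε₂
        (c.TT 0) (c.NN 0) (c.B₁B₁ 0) (c.B₂B₂ 0) (c.TN 0) (c.TB₁ 0) (c.TB₂ 0)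
        (c.NB₁ 0) (c.NB₂ 0) (c.B₁B₂ 0) (ha0 0) hb0 (hp0 0) (hC 0))
    refine ⟨fun s => (c.ε₂ / C) * mink (c.T s) U, ?_, ?_, ?_⟩
    · exact (contDiff_const.mul (mink_contDiff U c.smooth_T)).of_le (WithTop.coe_le_coe.mpr le_top)
    · intro s
      have h := key s
      rcases hε₁ with h1 | h1 <;> rcases hε₂ with h2 | h2 <;> rw [h1, h2] at h ⊢ <;>
        field_simp <;>
        (first
          | linear_combination h
          | linear_combination -h)
    · intro s
      have hf : HasDerivAt (fun s => (c.ε₂ / C) * mink (c.T s) U)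
          ((c.ε₂ / C) * mink (c.k₁ s • c.N s) U) s :=
        (mink_hasDerivAt U (c.hT s)).const_mul _
      rw [hf.deriv, mink_smul_left, hbval s]
      have hk := c.k₂_ne s
      rcases hε₂ with h2 | h2 <;> rw [h2] <;> field_simp <;> ring
  · rintro ⟨f, hf2, hfk, hfd⟩
    have hfd' : ∀ s, HasDerivAt f (deriv f s) s :=
      fun s => ((hf2.differentiable (by norm_num)) s).hasDerivAt
    set U : ℝ → Fin 4 → ℝ := fun t => (c.ε₂ * f t) • c.T t
      + (-(c.ε₁ * c.ε₂) * (c.k₃ t / c.k₂ t)) • c.N t + c.ε₂ • c.B₂ t with hUdef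
    have hUd : ∀ s, HasDerivAt U 0 s := by
      intro s
      have h1 : HasDerivAt (fun t => c.ε₂ * f t) (c.ε₂ * deriv f s) s :=
        (hfd' s).const_mul _
      have h2 : HasDerivAt (fun t => -(c.ε₁ * c.ε₂) * (c.k₃ t / c.k₂ t))
          (-(c.ε₁ * c.ε₂) * deriv (fun t => c.k₃ t / c.k₂ t) s) s := (hrd s).const_mul _
      have h3 : HasDerivAt (fun t => (c.ε₂ : ℝ) • c.B₂ t)
          (c.ε₂ • ((c.ε₁ * c.k₃ s) • c.B₁ s)) s := (c.hB₂ s).const_smul c.ε₂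
      have H := ((h1.smul (c.hT s)).add (h2.smul (c.hN s))).add h3
      rw [hUdef]
      refine H.congr_deriv ?_
      funext i
      have hk := c.k₂_ne s
      have e1 := hfk s
      have e3 : c.k₃ s / c.k₂ s * c.k₂ s = c.k₃ s := div_mul_cancel₀ _ hk
      simp only [Pi.add_apply, Pi.smul_apply, smul_eq_mul, Pi.zero_apply]
      rw [hfd s]
      rcases hε₁ with h1' | h1' <;> rcases hε₂ with h2' | h2' <;>
        rw [h1'] at e1 ⊢ <;> rw [h2'] <;>
        first
          | linear_combination (c.N s i) * e1 + (c.B₁ s i) * e3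
          | linear_combination -(c.N s i) * e1 + (c.B₁ s i) * e3
          | linear_combination (c.N s i) * e1 - (c.B₁ s i) * e3
          | linear_combination -(c.N s i) * e1 - (c.B₁ s i) * e3
    have hconst : ∀ s, U s = U 0 :=
      fun s => is_const_of_deriv_eq_zero (fun t => (hUd t).differentiableAt)
        (fun t => (hUd t).deriv) s 0
    have hone : ∀ s, mink (c.B₂ s) (U s) = 1 := by
      intro s
      rw [hUdef]
      simp only
      rw [mink_add_right, mink_add_right, mink_smul_right, mink_smul_right, mink_smul_right,
        show mink (c.B₂ s) (c.T s) = 0 from (mink_comm _ _).trans (c.TB₂ s),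
        show mink (c.B₂ s) (c.N s) = 0 from (mink_comm _ _).trans (c.NB₂ s),
        c.B₂B₂ s]
      rcases hε₂ with h2 | h2 <;> rw [h2] <;> ring
    refine ⟨U 0, ?_, 1, fun s => by rw [← hconst s]; exact hone s⟩
    intro h0
    have h := hone 0
    rw [hconst 0] at h  -- trivial
    rw [h0, mink_zero_right] at h
    exact one_ne_zero h.symm
end
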